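/- Under the hypotheses of the colored triangularization setup (E of dimension n over F₂, nonempty subsets D₁,...,Dₙ ⊆ E*\{0} such that every transversal is a basis of E*), at least one of the sets Dᵢ is a singleton. -/
import Mathlib

open Module

section aux

lemma zmod2_cases (c : ZMod 2) : c = 0 ∨ c = 1 := by revert c; decide

lemma zmod2_add_self (c : ZMod 2) : c + c = 0 := by revert c; decide

lemma add_self_zmod2 {M : Type*} [AddCommGroup M] [Module (ZMod 2) M] (w : M) :
    w + w = 0 := by
  have h : w + w = (2 : ZMod 2) • w := by rw [two_smul]
  rw [h, show (2 : ZMod 2) = 0 by decide, zero_smul]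

variable {E : Type*} [AddCommGroup E] [Module (ZMod 2) E]

/-- If a functional vanishes on the kernel of `δ ≠ 0`, it is a scalar multiple of `δ`. -/
lemma aux_scalar (δ : Dual (ZMod 2) E) (hδ : δ ≠ 0)
    (f : Dual (ZMod 2) E) (hf : ∀ y ∈ LinearMap.ker δ, f y = 0) :
    ∃ c : ZMod 2, f = c • δ := by
  obtain ⟨x, hx⟩ : ∃ x, δ x ≠ 0 := by
    by_contra h
    push_neg at h
    exact hδ (LinearMap.ext fun y => h y)
  have hx1 : δ x = 1 := (zmod2_cases (δ x)).resolve_left hx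
  refine ⟨f x, ?_⟩
  ext y
  have hker : y - δ y • x ∈ LinearMap.ker δ := by
    simp [LinearMap.mem_ker, hx1]
  have h1 := hf _ hker
  have h2 : f y - δ y * f x = 0 := by
    simpa [map_sub, map_smul, smul_eq_mul] using h1
  have h3 : f y = δ y * f x := by
    have := sub_eq_zero.mp h2; exact this
  simp [h3, LinearMap.smul_apply, smul_eq_mul, mul_comm]

end aux

universe u

theorem key (m : ℕ) : ∀ (E : Type u) [AddCommGroup E] [Module (ZMod 2) E]
    [FiniteDimensional (ZMod 2) E], finrank (ZMod 2) E = m →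
    ∀ (ι : Type) [Fintype ι], Fintype.card ι = m →
    ∀ D : ι → Set (Dual (ZMod 2) E),
    (∀ i, (D i).Nonempty) → (∀ i, (0 : Dual (ZMod 2) E) ∉ D i) →
    (∀ d : ι → Dual (ZMod 2) E, (∀ i, d i ∈ D i) → LinearIndependent (ZMod 2) d) →
    1 ≤ m → ∃ i x, D i = {x} := by
  induction m with
  | zero => intro E _ _ _ _ ι _ _ D _ _ _ h; omega
  | succ m ih =>
    intro E _ _ _ hdim ι _ hcard D hne h0 htrans _
    haveI := Fact.mk Nat.prime_two
    classical
    -- disjointness of the D i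
    have hdisj : ∀ (i k : ι), i ≠ k → ∀ x, x ∈ D i → x ∈ D k → False := by
      intro i k hik x hxi hxk
      set t : ι → Dual (ZMod 2) E :=
        fun l => if l = i ∨ l = k then x else Classical.choose (hne l) with ht
      have htm : ∀ l, t l ∈ D l := by
        intro l
        by_cases h : l = i ∨ l = k
        · rcases h with rfl | rfl
          · simp [t]; exact hxi
          · simp [t]; exact hxk
        · simp only [t, if_neg h]; exact Classical.choose_spec (hne l)
      have hinj := (htrans t htm).injective
      have h1 : t i = x := by simp [t]
      have h2 : t k = x := by simp [t]
      exact hik (hinj (h1.trans h2.symm))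
    rcases Nat.eq_zero_or_pos m with hm | hm
    · -- base case : dimension 1
      subst hm
      obtain ⟨i⟩ : Nonempty ι := Fintype.card_pos_iff.mp (by omega)
      obtain ⟨u, hu⟩ := hne i
      refine ⟨i, u, ?_⟩
      have hdual : finrank (ZMod 2) (Dual (ZMod 2) E) = 1 := by
        rw [Subspace.dual_finrank_eq, hdim]
      have hu0 : u ≠ 0 := fun h => h0 i (h ▸ hu)
      have hspan : Submodule.span (ZMod 2) {u} = ⊤ := by
        apply Submodule.eq_top_of_finrank_eq
        rw [finrank_span_singleton hu0, hdual]
      apply Set.eq_singleton_iff_unique_mem.mpr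
      refine ⟨hu, fun v hv => ?_⟩
      have hv0 : v ≠ 0 := fun h => h0 i (h ▸ hv)
      have hvmem : v ∈ Submodule.span (ZMod 2) {u} := hspan ▸ Submodule.mem_top
      obtain ⟨c, hc⟩ := Submodule.mem_span_singleton.mp hvmem
      rcases zmod2_cases c with rfl | rfl
      · rw [zero_smul] at hc; exact absurd hc.symm hv0
      · rw [one_smul] at hc; exact hc.symm
    · -- inductive step
      by_contra hcon
      push_neg at hcon
      -- every D i has two distinct elements
      have htwo : ∀ i, ∃ u ∈ D i, ∃ v ∈ D i, u ≠ v := by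
        intro i
        obtain ⟨u, hu⟩ := hne i
        by_contra h
        push_neg at h
        refine hcon i u (Set.eq_singleton_iff_unique_mem.mpr ⟨hu, fun v hv => ?_⟩)
        exact (h v hv u hu).symm ▸ rfl
      -- key claim : for every j and δ ∈ D j, some D i is a pair with difference δ
      have CL : ∀ j : ι, ∀ δ ∈ D j,
          ∃ i, i ≠ j ∧ ∃ w, D i = {w, w + δ} ∧ w ≠ w + δ := by
        intro j δ hδD
        have hδ0 : δ ≠ 0 := fun h => h0 j (h ▸ hδD)
        set K := LinearMap.ker δ with hK
        obtain ⟨x, hx⟩ : ∃ x, δ x ≠ 0 := by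
          by_contra h; push_neg at h; exact hδ0 (LinearMap.ext fun y => h y)
        have hx1 : δ x = 1 := (zmod2_cases (δ x)).resolve_left hx
        have hrange : LinearMap.range δ = ⊤ := by
          rw [LinearMap.range_eq_top]
          intro c
          exact ⟨c • x, by simp [hx1]⟩
        have hKdim : finrank (ZMod 2) K = m := by
          have h1 := LinearMap.finrank_range_add_finrank_ker δ
          rw [hrange, finrank_top, hdim, finrank_self] at h1
          rw [hK]
          omega
        set D' : {i // i ≠ j} → Set (Dual (ZMod 2) K) :=
          fun i => (fun f : Dual (ZMod 2) E => f.domRestrict K) '' D i.val with hD'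
        have hne' : ∀ i, (D' i).Nonempty := by
          intro i
          obtain ⟨f, hf⟩ := hne i.val
          exact ⟨f.domRestrict K, f, hf, rfl⟩
        have h0' : ∀ i, (0 : Dual (ZMod 2) K) ∉ D' i := by
          rintro i ⟨f, hfD, hf0⟩
          have hfK : ∀ y ∈ K, f y = 0 := by
            intro y hy
            have := LinearMap.congr_fun hf0 ⟨y, hy⟩
            simpa using this
          obtain ⟨c, hc⟩ := aux_scalar δ hδ0 f hfK
          rcases zmod2_cases c with rfl | rfl
          · rw [zero_smul] at hc; exact h0 i.val (hc ▸ hfD)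
          · rw [one_smul] at hc
            exact hdisj i.val j i.prop δ (hc ▸ hfD) hδD
        have htrans' : ∀ d' : {i // i ≠ j} → Dual (ZMod 2) K,
            (∀ i, d' i ∈ D' i) → LinearIndependent (ZMod 2) d' := by
          intro d' hd'
          choose u huD hures using fun i => hd' i
          rw [Fintype.linearIndependent_iff]
          intro g hg i0
          set F : Dual (ZMod 2) E := ∑ i : {i // i ≠ j}, g i • u i with hF
          have hFK : ∀ y ∈ K, F y = 0 := by
            intro y hy
            have h1 : F y = ∑ i : {i // i ≠ j}, g i • (u i) y := by
              simp [hF, LinearMap.sum_apply, LinearMap.smul_apply]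
            have h2 : ∀ i : {i // i ≠ j}, (u i) y = d' i ⟨y, hy⟩ := by
              intro i
              rw [← hures i]
              rfl
            rw [h1]
            simp_rw [h2]
            have h3 := LinearMap.congr_fun hg ⟨y, hy⟩
            simpa [LinearMap.sum_apply, LinearMap.smul_apply] using h3
          obtain ⟨c, hc⟩ := aux_scalar δ hδ0 F hFK
          set T : ι → Dual (ZMod 2) E :=
            fun k => if h : k = j then δ else u ⟨k, h⟩ with hT
          have hTm : ∀ k, T k ∈ D k := by
            intro k
            by_cases h : k = j
            · subst h; simp only [T, dif_pos]; exact hδD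
            · simp only [T, dif_neg h]; exact huD ⟨k, h⟩
          set h' : ι → ZMod 2 := fun k => if h : k = j then c else g ⟨k, h⟩ with hh'
          have hsum : ∑ k : ι, h' k • T k = 0 := by
            rw [← Finset.add_sum_erase Finset.univ _ (Finset.mem_univ j)]
            have h1 : h' j • T j = c • δ := by simp [h', T]
            have h2 : ∑ k ∈ Finset.univ.erase j, h' k • T k
                = ∑ i : {i // i ≠ j}, h' i.val • T i.val :=
              Finset.sum_subtype _ (by simp) _
            have h3 : ∀ i : {i // i ≠ j}, h' i.val • T i.val = g i • u i := by
              intro i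
              simp only [h', T, dif_neg i.prop]
            rw [h1, h2]
            simp_rw [h3]
            rw [← hF, hc, ← add_smul, zmod2_add_self, zero_smul]
          have hz := Fintype.linearIndependent_iff.mp (htrans T hTm) h' hsum
          have := hz i0.val
          simpa [h', dif_neg i0.prop] using this
        obtain ⟨i', x', hsing⟩ := ih K hKdim {i // i ≠ j}
          (by rw [Fintype.card_subtype_compl, Fintype.card_subtype_eq, hcard]; omega) D'
          hne' h0' htrans' hm
        obtain ⟨w, hw⟩ := hne i'.val
        have hwres : ∀ f ∈ D i'.val, f.domRestrict K = x' := by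
          intro f hf
          have : f.domRestrict K ∈ D' i' := ⟨f, hf, rfl⟩
          rw [hsing] at this
          exact this
        have hsub : ∀ f ∈ D i'.val, f = w ∨ f = w + δ := by
          intro f hf
          have h1 : ∀ y ∈ K, (f - w) y = 0 := by
            intro y hy
            have hfy : f y = x' ⟨y, hy⟩ := by
              rw [← hwres f hf]; rfl
            have hwy : w y = x' ⟨y, hy⟩ := by
              rw [← hwres w hw]; rfl
            simp [LinearMap.sub_apply, hfy, hwy]
          obtain ⟨c, hc⟩ := aux_scalar δ hδ0 (f - w) h1
          rcases zmod2_cases c with rfl | rfl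
          · left; rw [zero_smul] at hc; exact sub_eq_zero.mp hc
          · right
            rw [one_smul] at hc
            rw [← sub_add_cancel f w, hc, add_comm]
        have hwδ : w ≠ w + δ := by
          intro h
          apply hδ0
          have h2 := congrArg (fun z => z - w) h
          simpa using h2.symm
        have hmem : w + δ ∈ D i'.val := by
          by_contra hmem
          refine hcon i'.val w (Set.eq_singleton_iff_unique_mem.mpr ⟨hw, fun f hf => ?_⟩)
          rcases hsub f hf with rfl | rfl
          · rfl
          · exact absurd hf hmem
        refine ⟨i'.val, i'.prop, w, ?_, hwδ⟩
        apply Set.eq_of_subset_of_subset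
        · intro f hf
          rcases hsub f hf with rfl | rfl
          · exact Set.mem_insert _ _
          · exact Set.mem_insert_of_mem _ rfl
        · rintro f (rfl | rfl)
          · exact hw
          · exact hmem
      -- counting argument
      haveI : Finite E := Module.finite_of_finite (ZMod 2)
      haveI : Finite (Dual (ZMod 2) E) :=
        Finite.of_injective (fun f => (f : E → ZMod 2)) DFunLike.coe_injective
      haveI : Fintype (Dual (ZMod 2) E) := Fintype.ofFinite _
      set F : ι → Finset (Dual (ZMod 2) E) := fun i => (D i).toFinset with hF
      set σ : ι → Dual (ZMod 2) E := fun i => ∑ x ∈ F i, x with hσ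
      have hkey : ∀ j : ι, ∀ δ ∈ D j, ∃ i, σ i = δ := by
        intro j δ hδ
        obtain ⟨i, _, w, hDi, hwδ⟩ := CL j δ hδ
        refine ⟨i, ?_⟩
        have hFi : F i = {w, w + δ} := by
          simp [hF, hDi, Set.toFinset_insert, Set.toFinset_singleton]
        show (∑ x ∈ F i, x) = δ
        rw [hFi, Finset.sum_pair hwδ, ← add_assoc, add_self_zmod2, zero_add]
      have hsubset : Finset.univ.biUnion F ⊆ Finset.univ.image σ := by
        intro y hy
        simp only [Finset.mem_biUnion, Finset.mem_univ, true_and] at hy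
        obtain ⟨j, hj⟩ := hy
        obtain ⟨i, hi⟩ := hkey j y (by simpa [hF, Set.mem_toFinset] using hj)
        simp only [Finset.mem_image, Finset.mem_univ, true_and]
        exact ⟨i, hi⟩
      have hdisjF : ∀ i ∈ Finset.univ (α := ι), ∀ k ∈ Finset.univ (α := ι),
          i ≠ k → Disjoint (F i) (F k) := by
        intro i _ k _ hik
        rw [Finset.disjoint_left]
        intro x hxi hxk
        exact hdisj i k hik x (by simpa [hF, Set.mem_toFinset] using hxi)
          (by simpa [hF, Set.mem_toFinset] using hxk)
      have h1 : (Finset.univ.biUnion F).card = ∑ i, (F i).card :=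
        Finset.card_biUnion hdisjF
      have h2 : ∀ i, 2 ≤ (F i).card := by
        intro i
        obtain ⟨u, hu, v, hv, huv⟩ := htwo i
        exact Finset.one_lt_card.mpr
          ⟨u, by simpa [hF, Set.mem_toFinset] using hu,
           v, by simpa [hF, Set.mem_toFinset] using hv, huv⟩
      have h3 : ∑ i : ι, 2 ≤ ∑ i, (F i).card :=
        Finset.sum_le_sum fun i _ => h2 i
      have h4 : ∑ i : ι, 2 = 2 * (m + 1) := by
        rw [Finset.sum_const, Finset.card_univ, hcard, smul_eq_mul, mul_comm]
      have h5 : (Finset.univ.image σ).card ≤ m + 1 := by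
        calc (Finset.univ.image σ).card ≤ Finset.univ.card := Finset.card_image_le
        _ = m + 1 := by rw [Finset.card_univ, hcard]
      have h6 := Finset.card_le_card hsubset
      omega

/-- In the colored triangularization setup (`E` of dimension
`n ≥ 1` over `F₂`, nonempty sets `D₁,…,Dₙ ⊆ E* \ {0}` all of whose
transversals are bases of `E*`), at least one of the sets `Dᵢ` is a
singleton. -/
theorem stmt7 (n : ℕ) (hn : 1 ≤ n) (E : Type*) [AddCommGroup E]
    [Module (ZMod 2) E] [FiniteDimensional (ZMod 2) E]
    (hdim : Module.finrank (ZMod 2) E = n)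
    (D : Fin n → Set (Module.Dual (ZMod 2) E))
    (hne : ∀ i, (D i).Nonempty) (h0 : ∀ i, (0 : Module.Dual (ZMod 2) E) ∉ D i)
    (htrans : ∀ d : Fin n → Module.Dual (ZMod 2) E, (∀ i, d i ∈ D i) →
      LinearIndependent (ZMod 2) d) :
    ∃ (i : Fin n) (x : Module.Dual (ZMod 2) E), D i = {x} := by
  exact key n E hdim (Fin n) (Fintype.card_fin n) D hne h0 htrans hn
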